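/- If G is a graph whose vertex set is not a stable set, then thin(G) ≤ |V(G)| − α(G), where α(G) is the maximum size of a stable set in G. -/

import Mathlib

open SimpleGraph

/-- An ordering (given by an injective rank function `f`) and a partition (given by a
coloring `c`) are consistent: for `r < s < t`, if `r, s` are in the same class and
`t` is adjacent to `r`, then `t` is adjacent to `s`. -/
def Consistent {V : Type*} (G : SimpleGraph V) (f : V → ℕ) (c : V → ℕ) : Prop :=
  ∀ r s t : V, f r < f s → f s < f t → c r = c s → G.Adj t r → G.Adj t s

/-- Strong consistency: consistency with the ordering and with its reverse. -/
def StronglyConsistent {V : Type*} (G : SimpleGraph V) (f : V → ℕ) (c : V → ℕ) : Prop :=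
  Consistent G f c ∧
    ∀ r s t : V, f r < f s → f s < f t → c s = c t → G.Adj t r → G.Adj s r

/-- The thinness of a graph. -/
noncomputable def thin {V : Type*} (G : SimpleGraph V) : ℕ :=
  sInf {k | ∃ f c : V → ℕ, Function.Injective f ∧ (∀ v, c v < k) ∧ Consistent G f c}

/-- The proper thinness of a graph. -/
noncomputable def pthin {V : Type*} (G : SimpleGraph V) : ℕ :=
  sInf {k | ∃ f c : V → ℕ, Function.Injective f ∧ (∀ v, c v < k) ∧ StronglyConsistent G f c}

/-- Independent thinness: classes must be independent sets. -/
noncomputable def indthin {V : Type*} (G : SimpleGraph V) : ℕ :=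
  sInf {k | ∃ f c : V → ℕ, Function.Injective f ∧ (∀ v, c v < k) ∧ Consistent G f c ∧
    ∀ u v : V, c u = c v → ¬ G.Adj u v}

/-- Independent proper thinness. -/
noncomputable def indpthin {V : Type*} (G : SimpleGraph V) : ℕ :=
  sInf {k | ∃ f c : V → ℕ, Function.Injective f ∧ (∀ v, c v < k) ∧ StronglyConsistent G f c ∧
    ∀ u v : V, c u = c v → ¬ G.Adj u v}

/-- Complete thinness: classes must be cliques. -/
noncomputable def compthin {V : Type*} (G : SimpleGraph V) : ℕ :=
  sInf {k | ∃ f c : V → ℕ, Function.Injective f ∧ (∀ v, c v < k) ∧ Consistent G f c ∧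
    ∀ u v : V, u ≠ v → c u = c v → G.Adj u v}

/-- Complete proper thinness. -/
noncomputable def comppthin {V : Type*} (G : SimpleGraph V) : ℕ :=
  sInf {k | ∃ f c : V → ℕ, Function.Injective f ∧ (∀ v, c v < k) ∧ StronglyConsistent G f c ∧
    ∀ u v : V, u ≠ v → c u = c v → G.Adj u v}

/-- The incompatibility graph `G_<` of a graph and an ordering: for `v < w`,
`vw` is an edge iff there is `z > w` adjacent to `v` but not to `w`. -/
def incompat {V : Type*} (G : SimpleGraph V) (f : V → ℕ) : SimpleGraph V where
  Adj v w :=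
    (f v < f w ∧ ∃ z, f w < f z ∧ G.Adj z v ∧ ¬ G.Adj z w) ∨
    (f w < f v ∧ ∃ z, f v < f z ∧ G.Adj z w ∧ ¬ G.Adj z v)
  symm := ⟨fun v w h => h.symm⟩
  loopless := ⟨fun v h => by rcases h with ⟨h, _⟩ | ⟨h, _⟩ <;> exact lt_irrefl _ h⟩

/-- The join of two graphs. -/
def joinG {V₁ V₂ : Type*} (G₁ : SimpleGraph V₁) (G₂ : SimpleGraph V₂) :
    SimpleGraph (V₁ ⊕ V₂) where
  Adj x y := match x, y with
    | Sum.inl u, Sum.inl v => G₁.Adj u v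
    | Sum.inr u, Sum.inr v => G₂.Adj u v
    | Sum.inl _, Sum.inr _ => True
    | Sum.inr _, Sum.inl _ => True
  symm := by refine ⟨?_⟩
             rintro (u | u) (v | v) h
             · exact G₁.symm.symm _ _ h
             · trivial
             · trivial
             · exact G₂.symm.symm _ _ h
  loopless := by refine ⟨?_⟩
                 rintro (u | u) h
                 · exact G₁.loopless.irrefl u h
                 · exact G₂.loopless.irrefl u h

/-- A graph is complete iff all pairs of distinct vertices are adjacent. -/
def IsCompleteGraph {V : Type*} (G : SimpleGraph V) : Prop :=
  ∀ u v : V, u ≠ v → G.Adj u v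

/-- The clique number of a graph. -/
noncomputable def omegaNum {V : Type*} (G : SimpleGraph V) : ℕ :=
  sSup {n | ∃ s : Finset V, s.card = n ∧ ∀ u ∈ s, ∀ v ∈ s, u ≠ v → G.Adj u v}

/-- The independence number of a graph. -/
noncomputable def alphaNum {V : Type*} (G : SimpleGraph V) : ℕ :=
  sSup {n | ∃ s : Finset V, s.card = n ∧ ∀ u ∈ s, ∀ v ∈ s, u ≠ v → ¬ G.Adj u v}

/-!
Take a maximum stable set `S` and a vertex `u ∉ S`, which exists because `G` has an edge.
The set `S ∪ {u}` is a single consistent class once `u` is placed last, the neighbours of `u`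
in `S` after its non-neighbours, and all other vertices before `S`: the only vertex after two
vertices of `S` that is adjacent to one of them is `u`. Every remaining vertex forms its own
class, giving `|V| - |S| - 1 + 1` classes.
-/

open Finset

lemma alphaNum_eq_indepNum {V : Type*} (G : SimpleGraph V) : alphaNum G = G.indepNum := by
  simp only [alphaNum, indepNum, isNIndepSet_iff, IsIndepSet, Set.Pairwise, mem_coe, and_comm]

lemma exists_injective_refinement {V : Type*} [Fintype V] (g : V → ℕ) :
    ∃ f : V → ℕ, Function.Injective f ∧ ∀ a b, f a < f b → g a ≤ g b := by
  set n := Fintype.card V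
  let e : V ≃ Fin n := Fintype.equivFin V
  have key : ∀ a b, g a < g b → n * g a + e a < n * g b + e b := fun a b hab =>
    calc n * g a + e a < n * (g a + 1) := by rw [mul_add_one]; exact Nat.add_lt_add_left (e a).2 _
      _ ≤ n * g b := Nat.mul_le_mul_left n hab
      _ ≤ n * g b + e b := Nat.le_add_right _ _
  refine ⟨fun v => n * g v + e v, fun a b hab => ?_, fun a b hab => ?_⟩
  · have hg : g a = g b := by
      by_contra hne
      rcases Nat.lt_or_gt_of_ne hne with hlt | hlt
      · exact (key a b hlt).ne hab
      · exact (key b a hlt).ne hab.symm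
    simp only [hg, Nat.add_left_cancel_iff] at hab
    exact e.injective (Fin.ext hab)
  · exact not_lt.1 fun h => (key b a h).asymm hab

section Thinness

variable {V : Type*} (G : SimpleGraph V)

/-- `C` can serve as one class of a consistent partition for the ordering `f`. -/
def IsConsistentClass (f : V → ℕ) (C : Set V) : Prop :=
  ∀ r ∈ C, ∀ s ∈ C, ∀ t, f r < f s → f s < f t → G.Adj t r → G.Adj t s

variable {G}

lemma thin_le_card_compl_add_one [Fintype V] [DecidableEq V] {f : V → ℕ}
    (hf : Function.Injective f) {C : Finset V} (hC : IsConsistentClass G f C) :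
    thin G ≤ #Cᶜ + 1 := by
  let c : V → ℕ := fun v => if h : v ∈ C then 0 else (Cᶜ.equivFin ⟨v, mem_compl.2 h⟩ : ℕ) + 1
  refine Nat.sInf_le ⟨f, c, hf, fun v => ?_, fun r s t hrs hst hcrs hadj => ?_⟩
  · by_cases hv : v ∈ C
    · simp [c, hv]
    · simp only [c, hv, dite_false, add_lt_add_iff_right, Fin.is_lt]
  · by_cases hr : r ∈ C <;> by_cases hs : s ∈ C <;>
      simp only [c, hr, hs, dite_true, dite_false] at hcrs
    · exact hC r hr s hs t hrs hst hadj
    · omega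
    · omega
    · obtain rfl : r = s :=
        congrArg Subtype.val (Cᶜ.equivFin.injective (Fin.ext (Nat.add_right_cancel hcrs)))
      exact absurd hrs (lt_irrefl _)

/-- Order `V ∖ (S ∪ {u})` first, then the non-neighbours of `u` in `S`, then its neighbours
in `S`, and `u` last. -/
lemma exists_isConsistentClass_insert [Fintype V] {S : Set V} (hS : G.IsIndepSet S) {u : V}
    (hu : u ∉ S) : ∃ f : V → ℕ, Function.Injective f ∧ IsConsistentClass G f (insert u S) := by
  classical
  let g : V → ℕ := fun v => if v = u then 3 else if v ∈ S then (if G.Adj u v then 2 else 1) else 0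
  obtain ⟨f, hf, hg⟩ := exists_injective_refinement g
  have hu_last : ∀ v, ¬ f u < f v := by
    intro v huv
    have := hg u v huv
    by_cases hv : v = u
    · exact lt_irrefl _ (hv ▸ huv)
    · simp only [g, hv, if_true, if_false] at this
      split_ifs at this <;> omega
  refine ⟨f, hf, ?_⟩
  rintro r hr s hs t hrs hst hadj
  have hsS : s ∈ S := hs.resolve_left (by rintro rfl; exact hu_last t hst)
  have hrS : r ∈ S := hr.resolve_left (by rintro rfl; exact hu_last s hrs)
  have hsu : s ≠ u := ne_of_mem_of_not_mem hsS hu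
  have hru : r ≠ u := ne_of_mem_of_not_mem hrS hu
  by_cases htu : t = u
  · subst htu
    have := hg r s hrs
    by_contra hus
    simp only [g, hru, hsu, hrS, hsS, hadj, hus, if_true, if_false] at this
    omega
  · have htS : t ∈ S := by
      by_contra htS
      have := hg s t hst
      simp only [g, hsu, htu, hsS, htS, if_true, if_false] at this
      split_ifs at this <;> omega
    exact (hS htS hrS (G.ne_of_adj hadj) hadj).elim

end Thinness

/-- If the vertex set of `G` is not a stable set, then `thin G ≤ |V(G)| - α(G)`. -/
theorem thin_le_card_sub_alpha {V : Type*} [Fintype V] (G : SimpleGraph V)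
    (h : ∃ u v : V, G.Adj u v) :
    thin G ≤ Fintype.card V - alphaNum G := by
  classical
  obtain ⟨S, hS, hcard⟩ := G.exists_isNIndepSet_indepNum
  obtain ⟨x, y, hxy⟩ := h
  obtain ⟨u, hu⟩ : ∃ u, u ∉ S := by
    by_contra! hall
    exact hS (hall x) (hall y) hxy.ne hxy
  obtain ⟨f, hf, hC⟩ := exists_isConsistentClass_insert hS (mem_coe.not.2 hu)
  calc thin G ≤ #(insert u S)ᶜ + 1 := thin_le_card_compl_add_one hf (by rwa [coe_insert])
    _ = Fintype.card V - alphaNum G := by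
      have := card_le_univ (insert u S)
      rw [card_insert_of_notMem hu] at this
      rw [card_compl, card_insert_of_notMem hu, alphaNum_eq_indepNum, ← hcard]
      omega
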